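/- arXiv:2506.00442 — 2 statements merged into one kernel-verified Lean document; each statement's English description precedes it below -/
import Mathlib

section
/- Let k, n ∈ ℕ, α ∈ (0,1], L ≥ 0, s ∈ (0,1), p₁, p₂ ∈ (1,∞), and let G : ℂ → ℂ be α-Hölder with constant L and satisfy G(0) = 0. Then for every measurable u : ℝ^k × 𝕋^n → ℂ one has, as an inequality in [0,∞], ∫_{ℝ^k×ℝ^k} ( ‖G(u(z₁,·)) − G(u(z₂,·))‖_{L^{p₂/α}(𝕋^n)} / |z₁ − z₂|^{αs} )^{p₁/α} · |z₁ − z₂|^{−k} dz₁ dz₂ ≤ L^{p₁/α} · ∫_{ℝ^k×ℝ^k} ( ‖u(z₁,·) − u(z₂,·)‖_{L^{p₂}(𝕋^n)} / |z₁ − z₂|^{s} )^{p₁} · |z₁ − z₂|^{−k} dz₁ dz₂. -/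
open MeasureTheory
open scoped ENNReal NNReal

instance : Fact (0 < 2 * Real.pi) := ⟨by positivity⟩

/-! Pointwise, `|G w₁ - G w₂| ≤ L |w₁ - w₂|^α` raised to the power `p₂/α` turns the
`L^{p₂/α}`-norm of `G(u(z₁,·)) - G(u(z₂,·))` into at most `L` times the `α`-th power of the
`L^{p₂}`-norm of `u(z₁,·) - u(z₂,·)`. Dividing by `|z₁ - z₂|^{αs} = (|z₁ - z₂|^s)^α` and raising
to the power `p₁/α` then bounds the integrand on the left by `L^{p₁/α}` times the one on the
right, for every pair `(z₁, z₂)`. -/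

theorem enorm_sub_le_ofReal_mul_enorm_sub_rpow {E F : Type*} [SeminormedAddCommGroup E]
    [SeminormedAddCommGroup F] {f : E → F} {L α : ℝ} (hL : 0 ≤ L) (hα : 0 ≤ α)
    (hf : ∀ x y, ‖f x - f y‖ ≤ L * ‖x - y‖ ^ α) (x y : E) :
    ‖f x - f y‖ₑ ≤ ENNReal.ofReal L * ‖x - y‖ₑ ^ α := by
  rw [← ofReal_norm, ← ofReal_norm,
    ENNReal.ofReal_rpow_of_nonneg (norm_nonneg _) hα, ← ENNReal.ofReal_mul hL]
  exact ENNReal.ofReal_le_ofReal (hf x y)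

namespace ENNReal

theorem rpow_le_rpow_mul_rpow_of_le_mul_rpow {a b c : ℝ≥0∞} {r t : ℝ} (h : a ≤ c * b ^ r)
    (ht : 0 ≤ t) : a ^ t ≤ c ^ t * b ^ (r * t) :=
  calc a ^ t ≤ (c * b ^ r) ^ t := rpow_le_rpow h ht
    _ = c ^ t * b ^ (r * t) := by rw [mul_rpow_of_nonneg _ _ ht, rpow_mul]

theorem div_rpow_le_of_le_mul_rpow {a b c d : ℝ≥0∞} {r s q : ℝ} (hr : 0 < r) (hq : 0 ≤ q)
    (h : a ≤ c * b ^ r) : (a / d ^ (r * s)) ^ (q / r) ≤ c ^ (q / r) * (b / d ^ s) ^ q := by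
  have hdiv : a / d ^ (r * s) ≤ c * (b / d ^ s) ^ r :=
    calc a / d ^ (r * s) ≤ c * b ^ r / d ^ (r * s) := by gcongr
      _ = c * (b / d ^ s) ^ r := by
        rw [div_rpow_of_nonneg _ _ hr.le, ← rpow_mul, mul_comm s r, mul_div_assoc]
  simpa only [mul_div_cancel₀ q hr.ne'] using
    rpow_le_rpow_mul_rpow_of_le_mul_rpow hdiv (div_nonneg hq hr.le)

end ENNReal

theorem lintegral_rpow_rpow_le_mul_rpow_of_le_mul_rpow {X : Type*} [MeasurableSpace X]
    {μ : Measure X} {f g : X → ℝ≥0∞} {c : ℝ≥0∞} {r p : ℝ} (hc : c ≠ ∞) (hr : 0 < r)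
    (hp : 0 < p) (hfg : ∀ x, f x ≤ c * g x ^ r) :
    (∫⁻ x, f x ^ (p / r) ∂μ) ^ (r / p) ≤ c * ((∫⁻ x, g x ^ p ∂μ) ^ (1 / p)) ^ r := by
  have hpr : 0 ≤ p / r := div_nonneg hp.le hr.le
  have hint : ∫⁻ x, f x ^ (p / r) ∂μ ≤ c ^ (p / r) * ∫⁻ x, g x ^ p ∂μ := by
    rw [← lintegral_const_mul' _ _ (ENNReal.rpow_ne_top_of_nonneg hpr hc)]
    refine lintegral_mono fun x => ?_
    simpa only [mul_div_cancel₀ p hr.ne'] using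
      ENNReal.rpow_le_rpow_mul_rpow_of_le_mul_rpow (hfg x) hpr
  calc (∫⁻ x, f x ^ (p / r) ∂μ) ^ (r / p)
      ≤ (c ^ (p / r) * ∫⁻ x, g x ^ p ∂μ) ^ (r / p) :=
        ENNReal.rpow_le_rpow hint (div_nonneg hr.le hp.le)
    _ = c * ((∫⁻ x, g x ^ p ∂μ) ^ (1 / p)) ^ r := by
        rw [ENNReal.mul_rpow_of_nonneg _ _ (div_nonneg hr.le hp.le), ← ENNReal.rpow_mul,
          ← ENNReal.rpow_mul, show p / r * (r / p) = 1 by field_simp, ENNReal.rpow_one,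
          one_div_mul_eq_div]

theorem holder_comp_gagliardo_seminorm_general
    (k n : ℕ) (α L s : ℝ)
    (hα : 0 < α) (hL : 0 ≤ L)
    (p₁ p₂ : ℝ) (hp₁ : 1 < p₁) (hp₂ : 1 < p₂)
    (G : ℂ → ℂ)
    (hG : ∀ w₁ w₂ : ℂ, ‖G w₁ - G w₂‖ ≤ L * ‖w₁ - w₂‖ ^ α)
    (u : (EuclideanSpace ℝ (Fin k)) × (Fin n → AddCircle (2 * Real.pi)) → ℂ) :
    (∫⁻ z : EuclideanSpace ℝ (Fin k) × EuclideanSpace ℝ (Fin k),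
        ((∫⁻ y : Fin n → AddCircle (2 * Real.pi),
              (‖G (u (z.1, y)) - G (u (z.2, y))‖₊ : ℝ≥0∞) ^ (p₂ / α)) ^ (α / p₂)
            / edist z.1 z.2 ^ (α * s)) ^ (p₁ / α)
          * edist z.1 z.2 ^ (-(k : ℝ)))
      ≤ ENNReal.ofReal L ^ (p₁ / α) *
        ∫⁻ z : EuclideanSpace ℝ (Fin k) × EuclideanSpace ℝ (Fin k),
          ((∫⁻ y : Fin n → AddCircle (2 * Real.pi),
                (‖u (z.1, y) - u (z.2, y)‖₊ : ℝ≥0∞) ^ p₂) ^ (1 / p₂)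
              / edist z.1 z.2 ^ s) ^ p₁
            * edist z.1 z.2 ^ (-(k : ℝ)) := by
  have hL_ne_top : ENNReal.ofReal L ^ (p₁ / α) ≠ ∞ :=
    ENNReal.rpow_ne_top_of_nonneg (div_nonneg (by linarith) hα.le) ENNReal.ofReal_ne_top
  rw [← lintegral_const_mul' _ _ hL_ne_top]
  refine lintegral_mono fun z => ?_
  have hfiber := lintegral_rpow_rpow_le_mul_rpow_of_le_mul_rpow (μ := volume)
    ENNReal.ofReal_ne_top hα (by linarith : (0 : ℝ) < p₂) fun y =>
      enorm_sub_le_ofReal_mul_enorm_sub_rpow hL hα.le hG (u (z.1, y)) (u (z.2, y))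
  rw [← mul_assoc]
  exact mul_le_mul_left (ENNReal.div_rpow_le_of_le_mul_rpow hα (by linarith) hfiber) _

/-- The seminorm part of the second estimate of Corollary 3.2 of the paper: the
Gagliardo-type seminorm (characterizing the `L^{p₂}(𝕋^n)`-valued Besov seminorm on `ℝ^k`)
of `G∘u` with parameters `(αs, p₁/α, p₂/α)` is bounded by `L^{p₁/α}` times that of `u`
with parameters `(s, p₁, p₂)`, as an inequality in `[0,∞]`. -/
theorem holder_comp_gagliardo_seminorm
    (k n : ℕ) (hk : 0 < k) (hn : 0 < n) (α L s : ℝ)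
    (hα : 0 < α) (hα1 : α ≤ 1) (hL : 0 ≤ L) (hs : 0 < s) (hs1 : s < 1)
    (p₁ p₂ : ℝ) (hp₁ : 1 < p₁) (hp₂ : 1 < p₂)
    (G : ℂ → ℂ)
    (hG : ∀ w₁ w₂ : ℂ, ‖G w₁ - G w₂‖ ≤ L * ‖w₁ - w₂‖ ^ α)
    (hG0 : G 0 = 0)
    (u : (EuclideanSpace ℝ (Fin k)) × (Fin n → AddCircle (2 * Real.pi)) → ℂ)
    (hu : Measurable u) :
    (∫⁻ z : EuclideanSpace ℝ (Fin k) × EuclideanSpace ℝ (Fin k),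
        ((∫⁻ y : Fin n → AddCircle (2 * Real.pi),
              (‖G (u (z.1, y)) - G (u (z.2, y))‖₊ : ℝ≥0∞) ^ (p₂ / α)) ^ (α / p₂)
            / edist z.1 z.2 ^ (α * s)) ^ (p₁ / α)
          * edist z.1 z.2 ^ (-(k : ℝ)))
      ≤ ENNReal.ofReal L ^ (p₁ / α) *
        ∫⁻ z : EuclideanSpace ℝ (Fin k) × EuclideanSpace ℝ (Fin k),
          ((∫⁻ y : Fin n → AddCircle (2 * Real.pi),
                (‖u (z.1, y) - u (z.2, y)‖₊ : ℝ≥0∞) ^ p₂) ^ (1 / p₂)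
              / edist z.1 z.2 ^ s) ^ p₁
            * edist z.1 z.2 ^ (-(k : ℝ)) :=
  holder_comp_gagliardo_seminorm_general k n α L s hα hL p₁ p₂ hp₁ hp₂ G hG u
end

section
/- Let k, n ∈ ℕ, α ∈ (0,1], L ≥ 0, s ∈ (0,1), p₁, p₂ ∈ (1,∞), and let G : ℂ → ℂ be α-Hölder with constant L and satisfy G(0) = 0. For measurable v : ℝ^k × 𝕋^n → ℂ and parameters (σ, r₁, r₂) define the difference norm 𝒩_{σ,r₁,r₂}(v) := ‖v‖_{L^{r₁}_x L^{r₂}_y} + ( ∫_{ℝ^k×ℝ^k} ( ‖v(z₁,·) − v(z₂,·)‖_{L^{r₂}(𝕋^n)} / |z₁ − z₂|^{σ} )^{r₁} · |z₁ − z₂|^{−k} dz₁ dz₂ )^{1/r₁}. Then for every measurable u : ℝ^k × 𝕋^n → ℂ one has 𝒩_{αs, p₁/α, p₂/α}(G∘u) ≤ 2L · ( 𝒩_{s, p₁, p₂}(u) )^{α}. -/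
open MeasureTheory
open scoped ENNReal NNReal

/-- The difference norm `𝒩_{σ,r₁,r₂}(v)`: the mixed Lebesgue norm
`‖v‖_{L^{r₁}_x L^{r₂}_y}` plus the Gagliardo-type seminorm with smoothness `σ` and
integrability `r₁` on `ℝ^k`, taken with `L^{r₂}(𝕋^n)`-valued differences; this is
equivalent to the `B^σ_{r₁,r₁}(ℝ^k; L^{r₂}(𝕋^n))` norm. -/
noncomputable def mixedDiffNorm (k n : ℕ) (σ r₁ r₂ : ℝ)
    (v : (EuclideanSpace ℝ (Fin k)) × (Fin n → AddCircle (2 * Real.pi)) → ℂ) : ℝ≥0∞ :=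
  (∫⁻ x : EuclideanSpace ℝ (Fin k),
      (∫⁻ y : Fin n → AddCircle (2 * Real.pi),
          (‖v (x, y)‖₊ : ℝ≥0∞) ^ r₂) ^ (r₁ / r₂)) ^ (1 / r₁)
  + (∫⁻ z : EuclideanSpace ℝ (Fin k) × EuclideanSpace ℝ (Fin k),
      ((∫⁻ y : Fin n → AddCircle (2 * Real.pi),
            (‖v (z.1, y) - v (z.2, y)‖₊ : ℝ≥0∞) ^ r₂) ^ (1 / r₂)
          / edist z.1 z.2 ^ σ) ^ r₁
        * edist z.1 z.2 ^ (-(k : ℝ))) ^ (1 / r₁)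

/-!
Both parts of `𝒩` are weighted mixed norms `(∫ (∫ f ^ r₂) ^ (r₁ / r₂) · W) ^ (1 / r₁)`, the Gagliardo
part with weight `|z₁ - z₂| ^ (-σ r₁ - k)`, which is the same for `(αs, p₁/α)` as for `(s, p₁)`.
Raising the integrand to the power `α` turns the exponents `(r₁, r₂)` into `(r₁/α, r₂/α)`, so the
pointwise bounds `|G a - G b| ≤ L |a - b| ^ α` and `|G a| ≤ L |a| ^ α` bound each part of `𝒩(G ∘ u)`
by `L` times the `α`-th power of the corresponding part of `𝒩(u)`; then `a ^ α + b ^ α ≤ 2 (a + b) ^ α`.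
-/

noncomputable def weightedMixedNorm {X Y : Type*} [MeasurableSpace X] [MeasurableSpace Y]
    (μ : Measure X) (ν : Measure Y) (W : X → ℝ≥0∞) (r₁ r₂ : ℝ) (f : X → Y → ℝ≥0∞) : ℝ≥0∞ :=
  (∫⁻ x, (∫⁻ y, f x y ^ r₂ ∂ν) ^ (r₁ / r₂) * W x ∂μ) ^ (1 / r₁)

namespace weightedMixedNorm

variable {X Y : Type*} [MeasurableSpace X] [MeasurableSpace Y] (μ : Measure X) (ν : Measure Y)
  (W : X → ℝ≥0∞) {r₁ r₂ : ℝ} {f g : X → Y → ℝ≥0∞}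

theorem mono (hr₁ : 0 ≤ r₁) (hr₂ : 0 ≤ r₂) (h : ∀ x y, f x y ≤ g x y) :
    weightedMixedNorm μ ν W r₁ r₂ f ≤ weightedMixedNorm μ ν W r₁ r₂ g := by
  unfold weightedMixedNorm
  gcongr with x y
  exact h x y

theorem const_mul {C : ℝ≥0∞} (hC : C ≠ ∞) (hr₁ : 0 < r₁) (hr₂ : 0 < r₂) :
    weightedMixedNorm μ ν W r₁ r₂ (fun x y => C * f x y)
      = C * weightedMixedNorm μ ν W r₁ r₂ f := by
  have hC₂ : C ^ r₂ ≠ ∞ := ENNReal.rpow_ne_top_of_nonneg hr₂.le hC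
  have hC₁ : C ^ r₁ ≠ ∞ := ENNReal.rpow_ne_top_of_nonneg hr₁.le hC
  have inner (x : X) : (∫⁻ y, (C * f x y) ^ r₂ ∂ν) ^ (r₁ / r₂)
      = C ^ r₁ * (∫⁻ y, f x y ^ r₂ ∂ν) ^ (r₁ / r₂) := by
    simp_rw [ENNReal.mul_rpow_of_nonneg _ _ hr₂.le]
    rw [lintegral_const_mul' _ _ hC₂, ENNReal.mul_rpow_of_nonneg _ _ (by positivity),
      ← ENNReal.rpow_mul, mul_div_cancel₀ _ hr₂.ne']
  unfold weightedMixedNorm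
  simp_rw [inner, mul_assoc]
  rw [lintegral_const_mul' _ _ hC₁, ENNReal.mul_rpow_of_nonneg _ _ (by positivity),
    ← ENNReal.rpow_mul, mul_one_div_cancel hr₁.ne', ENNReal.rpow_one]

theorem rpow {α : ℝ} (hα : α ≠ 0) :
    weightedMixedNorm μ ν W (r₁ / α) (r₂ / α) (fun x y => f x y ^ α)
      = weightedMixedNorm μ ν W r₁ r₂ f ^ α := by
  unfold weightedMixedNorm
  simp_rw [← ENNReal.rpow_mul, mul_div_cancel₀ _ hα, div_div_div_cancel_right₀ hα]
  congr 1
  field_simp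

theorem le_const_mul_rpow_of_le {C : ℝ≥0∞} (hC : C ≠ ∞) {α : ℝ} (hα : 0 < α) (hr₁ : 0 < r₁)
    (hr₂ : 0 < r₂) (h : ∀ x y, f x y ≤ C * g x y ^ α) :
    weightedMixedNorm μ ν W (r₁ / α) (r₂ / α) f
      ≤ C * weightedMixedNorm μ ν W r₁ r₂ g ^ α :=
  calc weightedMixedNorm μ ν W (r₁ / α) (r₂ / α) f
      ≤ weightedMixedNorm μ ν W (r₁ / α) (r₂ / α) (fun x y => C * g x y ^ α) :=
        mono μ ν W (by positivity) (by positivity) h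
    _ = C * weightedMixedNorm μ ν W r₁ r₂ g ^ α := by
        rw [const_mul μ ν W hC (by positivity) (by positivity), rpow μ ν W hα.ne']

end weightedMixedNorm

theorem mixedDiffNorm_eq (k n : ℕ) (σ r₁ r₂ : ℝ) (hr₁ : 0 ≤ r₁)
    (v : (EuclideanSpace ℝ (Fin k)) × (Fin n → AddCircle (2 * Real.pi)) → ℂ) :
    mixedDiffNorm k n σ r₁ r₂ v
      = weightedMixedNorm volume volume 1 r₁ r₂ (fun x y => ‖v (x, y)‖₊)
        + weightedMixedNorm volume volume
            (fun z : EuclideanSpace ℝ (Fin k) × EuclideanSpace ℝ (Fin k) =>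
              edist z.1 z.2 ^ (-(σ * r₁)) * edist z.1 z.2 ^ (-(k : ℝ))) r₁ r₂
            (fun z y => ‖v (z.1, y) - v (z.2, y)‖₊) := by
  unfold mixedDiffNorm weightedMixedNorm
  simp only [Pi.one_apply, mul_one]
  congr 2
  refine lintegral_congr fun z => ?_
  rw [ENNReal.div_rpow_of_nonneg _ _ hr₁, ← ENNReal.rpow_mul, ← ENNReal.rpow_mul, div_eq_mul_inv,
    ← ENNReal.rpow_neg, mul_assoc, one_div_mul_eq_div]

theorem enorm_sub_le_of_holder {E F : Type*} [SeminormedAddCommGroup E]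
    [SeminormedAddCommGroup F] {G : E → F} {L α : ℝ} (hL : 0 ≤ L) (hα : 0 ≤ α)
    (hG : ∀ w₁ w₂ : E, ‖G w₁ - G w₂‖ ≤ L * ‖w₁ - w₂‖ ^ α) (a b : E) :
    (‖G a - G b‖₊ : ℝ≥0∞) ≤ ENNReal.ofReal L * (‖a - b‖₊ : ℝ≥0∞) ^ α := by
  change ‖G a - G b‖ₑ ≤ ENNReal.ofReal L * ‖a - b‖ₑ ^ α
  rw [← ofReal_norm, ← ofReal_norm, ENNReal.ofReal_rpow_of_nonneg (norm_nonneg _) hα,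
    ← ENNReal.ofReal_mul hL]
  exact ENNReal.ofReal_le_ofReal (hG a b)

theorem ENNReal.rpow_add_rpow_le_two_mul_rpow_add (a b : ℝ≥0∞) {α : ℝ} (hα : 0 ≤ α) :
    a ^ α + b ^ α ≤ 2 * (a + b) ^ α := by
  rw [two_mul]
  gcongr
  exacts [le_self_add, le_add_self]

theorem holder_comp_besov_mixed_general
    (k n : ℕ) (α L s : ℝ)
    (hα : 0 < α) (hL : 0 ≤ L)
    (p₁ p₂ : ℝ) (hp₁ : 1 < p₁) (hp₂ : 1 < p₂)
    (G : ℂ → ℂ)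
    (hG : ∀ w₁ w₂ : ℂ, ‖G w₁ - G w₂‖ ≤ L * ‖w₁ - w₂‖ ^ α)
    (hG0 : G 0 = 0)
    (u : (EuclideanSpace ℝ (Fin k)) × (Fin n → AddCircle (2 * Real.pi)) → ℂ) :
    mixedDiffNorm k n (α * s) (p₁ / α) (p₂ / α) (fun w => G (u w))
      ≤ ENNReal.ofReal (2 * L) * (mixedDiffNorm k n s p₁ p₂ u) ^ α := by
  have hp₁0 : 0 < p₁ := zero_lt_one.trans hp₁
  have hp₂0 : 0 < p₂ := zero_lt_one.trans hp₂
  have hweight : α * s * (p₁ / α) = s * p₁ := by field_simp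
  have hHolder := enorm_sub_le_of_holder hL hα.le hG
  rw [mixedDiffNorm_eq _ _ _ _ _ (by positivity), mixedDiffNorm_eq _ _ _ _ _ hp₁0.le, hweight]
  refine (add_le_add
    (weightedMixedNorm.le_const_mul_rpow_of_le _ _ _ ENNReal.ofReal_ne_top hα hp₁0 hp₂0
      fun x y => by simpa [hG0] using hHolder (u (x, y)) 0)
    (weightedMixedNorm.le_const_mul_rpow_of_le _ _ _ ENNReal.ofReal_ne_top hα hp₁0 hp₂0
      fun z y => hHolder _ _)).trans ?_
  rw [← mul_add, ENNReal.ofReal_mul zero_le_two, ENNReal.ofReal_ofNat, mul_comm (2 : ℝ≥0∞),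
    mul_assoc]
  gcongr
  exact ENNReal.rpow_add_rpow_le_two_mul_rpow_add _ _ hα.le

/-- The second estimate of Corollary 3.2 of the paper, in the difference-norm
formulation: for an `α`-Hölder `G : ℂ → ℂ` with constant `L` and `G(0) = 0`,
`𝒩_{αs, p₁/α, p₂/α}(G∘u) ≤ 2L · (𝒩_{s, p₁, p₂}(u))^α`. -/
theorem holder_comp_besov_mixed
    (k n : ℕ) (hk : 0 < k) (hn : 0 < n) (α L s : ℝ)
    (hα : 0 < α) (hα1 : α ≤ 1) (hL : 0 ≤ L) (hs : 0 < s) (hs1 : s < 1)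
    (p₁ p₂ : ℝ) (hp₁ : 1 < p₁) (hp₂ : 1 < p₂)
    (G : ℂ → ℂ)
    (hG : ∀ w₁ w₂ : ℂ, ‖G w₁ - G w₂‖ ≤ L * ‖w₁ - w₂‖ ^ α)
    (hG0 : G 0 = 0)
    (u : (EuclideanSpace ℝ (Fin k)) × (Fin n → AddCircle (2 * Real.pi)) → ℂ)
    (hu : Measurable u) :
    mixedDiffNorm k n (α * s) (p₁ / α) (p₂ / α) (fun w => G (u w))
      ≤ ENNReal.ofReal (2 * L) * (mixedDiffNorm k n s p₁ p₂ u) ^ α :=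
  holder_comp_besov_mixed_general k n α L s hα hL p₁ p₂ hp₁ hp₂ G hG hG0 u
end
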